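/- Let S and T be probability distributions on X × Y with marginals S_X, T_X, let F be a class of score functions, and fix ρ > 0, ε > 0, p ≥ 1 (all relevant integrands measurable and integrable). Suppose f* ∈ F minimizes f ↦ R^{(ρ)}_T(f) + R^{(ρ)}_S(f) over F, and set λ = R^{(ρ)}_T(f*) + R^{(ρ)}_S(f*). Then for every f ∈ F: R^{rob}_T(f) ≤ R^{(ρ)}_S(f) + d^{rob,(ρ)}_{f,F}(S_X, T_X) + λ. -/

import Mathlib

noncomputable section
open MeasureTheory Finset Set

namespace RobustUDA

/-- The input space: `ℝ^d`. -/
abbrev Inp (d : ℕ) := Fin d → ℝ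

variable {d C : ℕ}

/-- `ℓ_p`-norm of a vector in `ℝ^d`. -/
def pnorm (p : ℝ) (v : Inp d) : ℝ := (∑ i, |v i| ^ p) ^ (1 / p)

/-- The `ε`-ball centered at `x` in the `ℓ_p`-norm. -/
def ball (p ε : ℝ) (x : Inp d) : Set (Inp d) := {x' | pnorm p (fun i => x i - x' i) ≤ ε}

open Classical in
/-- Indicator function of a proposition, real valued. -/
def ind (P : Prop) : ℝ := if P then 1 else 0

/-- The ramp function `Φ_ρ`. -/
def ramp (ρ t : ℝ) : ℝ := if t ≤ 0 then 1 else if t ≤ ρ then 1 - t / ρ else 0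

/-- The margin `M_f(x,y) = f_y(x) - max_{y' ≠ y} f_{y'}(x)`. -/
def margin (f : Inp d → Fin C → ℝ) (x : Inp d) (y : Fin C) : ℝ :=
  f x y - sSup (f x '' {y' | y' ≠ y})

/-- Standard (0-1) risk of a classifier `hf` on a distribution `D` on `X × Y`. -/
def stdRisk (D : Measure (Inp d × Fin C)) (hf : Inp d → Fin C) : ℝ :=
  ∫ z, ind (z.2 ≠ hf z.1) ∂D

/-- Robust (0-1) risk of a classifier `hf`. -/
def robustRisk (p ε : ℝ) (D : Measure (Inp d × Fin C)) (hf : Inp d → Fin C) : ℝ :=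
  ∫ z, sSup ((fun x' => ind (z.2 ≠ hf x')) '' ball p ε z.1) ∂D

/-- Margin risk `R^{(ρ)}_D(f)`. -/
def marginRisk (ρ : ℝ) (D : Measure (Inp d × Fin C)) (f : Inp d → Fin C → ℝ) : ℝ :=
  ∫ z, ramp ρ (margin f z.1 z.2) ∂D

/-- Robust margin risk `R^{rob,(ρ)}_D(f)`. -/
def robustMarginRisk (p ε ρ : ℝ) (D : Measure (Inp d × Fin C)) (f : Inp d → Fin C → ℝ) : ℝ :=
  ∫ z, sSup ((fun x' => ramp ρ (margin f x' z.2)) '' ball p ε z.1) ∂D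

/-- Margin disparity `disp^{(ρ)}_{D_X}(f', f)`, where `hf'` is the classifier induced by `f'`. -/
def marginDisp (ρ : ℝ) (DX : Measure (Inp d)) (hf' : Inp d → Fin C)
    (f : Inp d → Fin C → ℝ) : ℝ :=
  ∫ x, ramp ρ (margin f x (hf' x)) ∂DX

/-- 0-1 robust disparity `disp^{rob}_{D_X}(f', f)`. -/
def robDisp (p ε : ℝ) (DX : Measure (Inp d)) (hf' hf : Inp d → Fin C) : ℝ :=
  ∫ x, sSup ((fun x' => ind (hf' x ≠ hf x')) '' ball p ε x) ∂DX

/-- Robust margin disparity `disp^{rob,(ρ)}_{D_X}(f', f)`. -/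
def robMarginDisp (p ε ρ : ℝ) (DX : Measure (Inp d)) (hf' : Inp d → Fin C)
    (f : Inp d → Fin C → ℝ) : ℝ :=
  ∫ x, sSup ((fun x' => ramp ρ (margin f x' (hf' x))) '' ball p ε x) ∂DX

/-- Point-wise local Lipschitz constant `L_f(x, ε)` (w.r.t. the `ℓ_p` ball and `ℓ₁` output norm). -/
def locLip (p ε : ℝ) (f : Inp d → Fin C → ℝ) (x : Inp d) : ℝ :=
  sSup ((fun x' => (∑ c, |f x' c - f x c|) / pnorm p (fun i => x' i - x i)) ''
    {x' | x' ∈ ball p ε x ∧ x' ≠ x})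

/-- Topological support of a measure on the input space. -/
def msupport (μ : Measure (Inp d)) : Set (Inp d) :=
  {x | ∀ U : Set (Inp d), IsOpen U → x ∈ U → 0 < μ U}

/-- Local Lipschitz constant `L_f(D_X, ε)` over the support of `D_X`. -/
def locLipOn (p ε : ℝ) (f : Inp d → Fin C → ℝ) (μ : Measure (Inp d)) : ℝ :=
  sSup (locLip p ε f '' msupport μ)

/-- Robust margin disparity discrepancy `d^{rob,(ρ)}_{f,F}(S_X, T_X)` where `cl` assigns
to each score function its induced classifier. -/
def discrepancy (p ε ρ : ℝ) (F : Set (Inp d → Fin C → ℝ))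
    (cl : (Inp d → Fin C → ℝ) → Inp d → Fin C)
    (SX TX : Measure (Inp d)) (f : Inp d → Fin C → ℝ) : ℝ :=
  sSup ((fun f' => robMarginDisp p ε ρ TX (cl f') f - marginDisp ρ SX (cl f') f) '' F)

/-- The class `Π₁F` of component functions of score functions in `F`. -/
def Pi1 (F : Set (Inp d → Fin C → ℝ)) : Set (Inp d → ℝ) :=
  {g | ∃ f ∈ F, ∃ y : Fin C, g = fun x => f x y}

/-- The class `Π_H F` where `H = {h_f : f ∈ F}` is given by the classifier assignment `cl`. -/
def PiH (F : Set (Inp d → Fin C → ℝ)) (cl : (Inp d → Fin C → ℝ) → Inp d → Fin C) :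
    Set (Inp d → ℝ) :=
  {g | ∃ f ∈ F, ∃ f' ∈ F, g = fun x => f x (cl f' x)}

/-- Rademacher complexity `ℜ_{n,D}(G)` of a class `G` of real functions on `Z`. -/
def rademacher (n : ℕ) {Z : Type*} [MeasurableSpace Z] (D : Measure Z) (G : Set (Z → ℝ)) : ℝ :=
  ∫ z : Fin n → Z, ∫ σ : Fin n → Bool,
      sSup ((fun g => (n : ℝ)⁻¹ * ∑ i, (if σ i then (1 : ℝ) else -1) * g (z i)) '' G)
    ∂(Measure.pi fun _ => (PMF.uniformOfFintype Bool).toMeasure) ∂(Measure.pi fun _ => D)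


/-! If `h_f(x') ≠ y`, then either `h_{f*}(x) ≠ y`, so `f*` has a nonpositive margin at `(x, y)`, or
`h_{f*}(x) = y ≠ h_f(x')`, so `f` has a nonpositive margin at `(x', h_{f*}(x))`. Hence the robust
0-1 loss of `f` at `(x, y)` is at most `Φ_ρ(M_{f*}(x, y)) + sup_{x'} Φ_ρ(M_f(x', h_{f*}(x)))`, and
integrating over `T` gives `R^{rob}_T(f) ≤ R^{(ρ)}_T(f*) + disp^{rob,(ρ)}_{T_X}(f*, f)`. The same case
split gives `disp^{(ρ)}_{S_X}(f*, f) ≤ R^{(ρ)}_S(f) + R^{(ρ)}_S(f*)`, and since `f* ∈ F` the gap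
`disp^{rob,(ρ)}_{T_X}(f*, f) - disp^{(ρ)}_{S_X}(f*, f)` is at most the discrepancy. -/

lemma ind_nonneg (P : Prop) : 0 ≤ ind P := by
  unfold ind
  split_ifs <;> norm_num

lemma ramp_nonneg (ρ t : ℝ) : 0 ≤ ramp ρ t := by
  unfold ramp
  split_ifs with ht₀ htρ
  · exact zero_le_one
  · linarith [div_le_one_of_le₀ htρ (by linarith : 0 ≤ ρ)]
  · exact le_rfl

lemma ramp_le_one (ρ t : ℝ) : ramp ρ t ≤ 1 := by
  unfold ramp
  split_ifs with ht₀ htρ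
  · exact le_rfl
  · linarith [div_nonneg (by linarith : 0 ≤ t) (by linarith : 0 ≤ ρ)]
  · exact zero_le_one

lemma ramp_of_nonpos {ρ t : ℝ} (ht : t ≤ 0) : ramp ρ t = 1 := if_pos ht

lemma sSup_image_ramp_nonneg {α : Type*} (ρ : ℝ) (g : α → ℝ) (s : Set α) :
    0 ≤ sSup ((fun a => ramp ρ (g a)) '' s) :=
  Real.sSup_nonneg (by rintro _ ⟨a, -, rfl⟩; exact ramp_nonneg ρ _)

lemma sSup_image_ramp_le_one {α : Type*} (ρ : ℝ) (g : α → ℝ) (s : Set α) :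
    sSup ((fun a => ramp ρ (g a)) '' s) ≤ 1 :=
  Real.sSup_le (by rintro _ ⟨a, -, rfl⟩; exact ramp_le_one ρ _) zero_le_one

lemma ramp_le_sSup_image {α : Type*} (ρ : ℝ) (g : α → ℝ) {s : Set α} {a : α} (ha : a ∈ s) :
    ramp ρ (g a) ≤ sSup ((fun a => ramp ρ (g a)) '' s) :=
  le_csSup ⟨1, by rintro _ ⟨b, -, rfl⟩; exact ramp_le_one ρ _⟩ ⟨a, ha, rfl⟩

lemma margin_nonpos_of_le {g : Inp d → Fin C → ℝ} {x : Inp d} {y y₀ : Fin C}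
    (hne : y₀ ≠ y) (hle : g x y ≤ g x y₀) : margin g x y ≤ 0 := by
  have : g x y₀ ≤ sSup (g x '' {y' | y' ≠ y}) :=
    le_csSup (Set.toFinite _).bddAbove ⟨y₀, hne, rfl⟩
  unfold margin
  linarith

section Classifier

variable {cl : (Inp d → Fin C → ℝ) → Inp d → Fin C}

lemma ramp_margin_of_cl_ne
    (hcl : ∀ (g : Inp d → Fin C → ℝ) (x : Inp d) (y : Fin C), g x y ≤ g x (cl g x))
    (ρ : ℝ) {g : Inp d → Fin C → ℝ} {x : Inp d} {y : Fin C} (hne : cl g x ≠ y) :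
    ramp ρ (margin g x y) = 1 :=
  ramp_of_nonpos (margin_nonpos_of_le hne (hcl g x y))

lemma ind_ne_cl_le_ramp_add_ramp
    (hcl : ∀ (g : Inp d → Fin C → ℝ) (x : Inp d) (y : Fin C), g x y ≤ g x (cl g x))
    (ρ : ℝ) (f fs : Inp d → Fin C → ℝ) (x x' : Inp d) (y : Fin C) :
    ind (y ≠ cl f x') ≤ ramp ρ (margin fs x y) + ramp ρ (margin f x' (cl fs x)) := by
  have h₁ := ramp_nonneg ρ (margin fs x y)
  have h₂ := ramp_nonneg ρ (margin f x' (cl fs x))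
  by_cases hy : y = cl f x'
  · rw [ind, if_neg (not_not.mpr hy)]
    linarith
  rw [ind, if_pos hy]
  by_cases hfs : cl fs x = y
  · rw [hfs, ramp_margin_of_cl_ne hcl ρ (Ne.symm hy)]
    linarith
  · rw [ramp_margin_of_cl_ne hcl ρ hfs]
    linarith

lemma ramp_margin_cl_le_ramp_add_ramp
    (hcl : ∀ (g : Inp d → Fin C → ℝ) (x : Inp d) (y : Fin C), g x y ≤ g x (cl g x))
    (ρ : ℝ) (f fs : Inp d → Fin C → ℝ) (x : Inp d) (y : Fin C) :
    ramp ρ (margin f x (cl fs x)) ≤ ramp ρ (margin f x y) + ramp ρ (margin fs x y) := by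
  by_cases hfs : cl fs x = y
  · rw [hfs]
    linarith [ramp_nonneg ρ (margin fs x y)]
  · rw [ramp_margin_of_cl_ne hcl ρ hfs]
    linarith [ramp_le_one ρ (margin f x (cl fs x)), ramp_nonneg ρ (margin f x y)]

lemma robustRisk_le_marginRisk_add_robMarginDisp
    (hcl : ∀ (g : Inp d → Fin C → ℝ) (x : Inp d) (y : Fin C), g x y ≤ g x (cl g x))
    {ρ ε p : ℝ} {T : Measure (Inp d × Fin C)} {f fs : Inp d → Fin C → ℝ}
    (hfs : Integrable (fun z => ramp ρ (margin fs z.1 z.2)) T)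
    (hdisp : Integrable
      (fun x => sSup ((fun x' => ramp ρ (margin f x' (cl fs x))) '' ball p ε x)) (T.map Prod.fst)) :
    robustRisk p ε T (cl f) ≤ marginRisk ρ T fs + robMarginDisp p ε ρ (T.map Prod.fst) (cl fs) f := by
  set Ψ : Inp d → ℝ := fun x => sSup ((fun x' => ramp ρ (margin f x' (cl fs x))) '' ball p ε x)
  have hΨ : Integrable (fun z : Inp d × Fin C => Ψ z.1) T :=
    hdisp.comp_measurable measurable_fst
  have hpointwise (z : Inp d × Fin C) :
      sSup ((fun x' => ind (z.2 ≠ cl f x')) '' ball p ε z.1) ≤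
        ramp ρ (margin fs z.1 z.2) + Ψ z.1 := by
    refine Real.sSup_le ?_ (add_nonneg (ramp_nonneg _ _) (sSup_image_ramp_nonneg _ _ _))
    rintro _ ⟨x', hx', rfl⟩
    linarith [ind_ne_cl_le_ramp_add_ramp hcl ρ f fs z.1 x' z.2,
      ramp_le_sSup_image ρ (fun x' => margin f x' (cl fs z.1)) hx']
  have hind_nonneg (z : Inp d × Fin C) :
      0 ≤ sSup ((fun x' => ind (z.2 ≠ cl f x')) '' ball p ε z.1) := by
    refine Real.sSup_nonneg ?_
    rintro _ ⟨x', -, rfl⟩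
    exact ind_nonneg _
  calc robustRisk p ε T (cl f)
      ≤ ∫ z, (ramp ρ (margin fs z.1 z.2) + Ψ z.1) ∂T :=
        integral_mono_of_nonneg (.of_forall hind_nonneg) (hfs.add hΨ) (.of_forall hpointwise)
    _ = marginRisk ρ T fs + robMarginDisp p ε ρ (T.map Prod.fst) (cl fs) f := by
        rw [integral_add hfs hΨ, robMarginDisp,
          integral_map measurable_fst.aemeasurable hdisp.aestronglyMeasurable]
        rfl

lemma marginDisp_le_marginRisk_add_marginRisk
    (hcl : ∀ (g : Inp d → Fin C → ℝ) (x : Inp d) (y : Fin C), g x y ≤ g x (cl g x))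
    {ρ : ℝ} {S : Measure (Inp d × Fin C)} {f fs : Inp d → Fin C → ℝ}
    (hf : Integrable (fun z => ramp ρ (margin f z.1 z.2)) S)
    (hfs : Integrable (fun z => ramp ρ (margin fs z.1 z.2)) S)
    (hdisp : Integrable (fun x => ramp ρ (margin f x (cl fs x))) (S.map Prod.fst)) :
    marginDisp ρ (S.map Prod.fst) (cl fs) f ≤ marginRisk ρ S f + marginRisk ρ S fs := by
  rw [marginDisp, integral_map measurable_fst.aemeasurable hdisp.aestronglyMeasurable,
    marginRisk, marginRisk, ← integral_add hf hfs]
  exact integral_mono_of_nonneg (.of_forall fun _ => ramp_nonneg _ _) (hf.add hfs)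
    (.of_forall fun z => ramp_margin_cl_le_ramp_add_ramp hcl ρ f fs z.1 z.2)

end Classifier

lemma robMarginDisp_sub_marginDisp_le_discrepancy {p ε ρ : ℝ} {F : Set (Inp d → Fin C → ℝ)}
    {cl : (Inp d → Fin C → ℝ) → Inp d → Fin C} {SX TX : Measure (Inp d)} [IsFiniteMeasure TX]
    (f : Inp d → Fin C → ℝ) {f' : Inp d → Fin C → ℝ} (hf' : f' ∈ F) :
    robMarginDisp p ε ρ TX (cl f') f - marginDisp ρ SX (cl f') f ≤
      discrepancy p ε ρ F cl SX TX f := by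
  refine le_csSup ⟨TX.real Set.univ, ?_⟩ ⟨f', hf', rfl⟩
  rintro _ ⟨g, -, rfl⟩
  have hrob : robMarginDisp p ε ρ TX (cl g) f ≤ ∫ _, (1 : ℝ) ∂TX :=
    integral_mono_of_nonneg (.of_forall fun _ => sSup_image_ramp_nonneg _ _ _)
      (integrable_const 1) (.of_forall fun _ => sSup_image_ramp_le_one _ _ _)
  have hdisp : 0 ≤ marginDisp ρ SX (cl g) f := integral_nonneg fun _ => ramp_nonneg _ _
  simp only [integral_const, smul_eq_mul, mul_one] at hrob
  linarith

theorem robustRisk_le_marginRisk_add_discrepancy_general {d C : ℕ}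
    (ρ ε p : ℝ)
    (S T : Measure (Inp d × Fin C)) [IsProbabilityMeasure T]
    (F : Set (Inp d → Fin C → ℝ))
    (cl : (Inp d → Fin C → ℝ) → Inp d → Fin C)
    (hcl : ∀ (g : Inp d → Fin C → ℝ) (x : Inp d) (y : Fin C), g x y ≤ g x (cl g x))
    (fs : Inp d → Fin C → ℝ) (hfsF : fs ∈ F)
    (hint2 : ∀ f ∈ F, Integrable (fun z => ramp ρ (margin f z.1 z.2)) S)
    (hint3 : ∀ f ∈ F, Integrable (fun z => ramp ρ (margin f z.1 z.2)) T)
    (hint4 : ∀ f ∈ F, ∀ f' ∈ F, Integrable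
      (fun x => sSup ((fun x' => ramp ρ (margin f x' (cl f' x))) '' ball p ε x))
      (T.map Prod.fst))
    (hint5 : ∀ f ∈ F, ∀ f' ∈ F,
      Integrable (fun x => ramp ρ (margin f x (cl f' x))) (S.map Prod.fst)) :
    ∀ f ∈ F, robustRisk p ε T (cl f) ≤
      marginRisk ρ S f + discrepancy p ε ρ F cl (S.map Prod.fst) (T.map Prod.fst) f +
        (marginRisk ρ T fs + marginRisk ρ S fs) := by
  intro f hf
  have hT := robustRisk_le_marginRisk_add_robMarginDisp hcl (hint3 fs hfsF) (hint4 f hf fs hfsF)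
  have hgap := robMarginDisp_sub_marginDisp_le_discrepancy (p := p) (ε := ε) (ρ := ρ) (cl := cl)
    (SX := S.map Prod.fst) (TX := T.map Prod.fst) f hfsF
  have hS := marginDisp_le_marginRisk_add_marginRisk hcl (hint2 f hf) (hint2 fs hfsF)
    (hint5 f hf fs hfsF)
  linarith

/-- **Eq. (12).** If `f* ∈ F` minimizes `f ↦ R^{(ρ)}_T(f) + R^{(ρ)}_S(f)` over `F`
and `λ = R^{(ρ)}_T(f*) + R^{(ρ)}_S(f*)`, then for every `f ∈ F`:
`R^{rob}_T(f) ≤ R^{(ρ)}_S(f) + d^{rob,(ρ)}_{f,F}(S_X, T_X) + λ`. -/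
theorem robustRisk_le_marginRisk_add_discrepancy {d C : ℕ} (hC : 2 ≤ C)
    (ρ ε p : ℝ) (hρ : 0 < ρ) (hε : 0 < ε) (hp : 1 ≤ p)
    (S T : Measure (Inp d × Fin C)) [IsProbabilityMeasure S] [IsProbabilityMeasure T]
    (F : Set (Inp d → Fin C → ℝ))
    (cl : (Inp d → Fin C → ℝ) → Inp d → Fin C)
    (hcl : ∀ (g : Inp d → Fin C → ℝ) (x : Inp d) (y : Fin C), g x y ≤ g x (cl g x))
    (fs : Inp d → Fin C → ℝ) (hfsF : fs ∈ F)
    (hmin : ∀ g ∈ F, marginRisk ρ T fs + marginRisk ρ S fs ≤ marginRisk ρ T g + marginRisk ρ S g)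
    (hint1 : ∀ f ∈ F,
      Integrable (fun z => sSup ((fun x' => ind (z.2 ≠ cl f x')) '' ball p ε z.1)) T)
    (hint2 : ∀ f ∈ F, Integrable (fun z => ramp ρ (margin f z.1 z.2)) S)
    (hint3 : ∀ f ∈ F, Integrable (fun z => ramp ρ (margin f z.1 z.2)) T)
    (hint4 : ∀ f ∈ F, ∀ f' ∈ F, Integrable
      (fun x => sSup ((fun x' => ramp ρ (margin f x' (cl f' x))) '' ball p ε x))
      (T.map Prod.fst))
    (hint5 : ∀ f ∈ F, ∀ f' ∈ F,
      Integrable (fun x => ramp ρ (margin f x (cl f' x))) (S.map Prod.fst)) :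
    ∀ f ∈ F, robustRisk p ε T (cl f) ≤
      marginRisk ρ S f + discrepancy p ε ρ F cl (S.map Prod.fst) (T.map Prod.fst) f +
        (marginRisk ρ T fs + marginRisk ρ S fs) :=
  robustRisk_le_marginRisk_add_discrepancy_general ρ ε p S T F cl hcl fs hfsF hint2 hint3 hint4
    hint5

end RobustUDA
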